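/- Fix integers n, j, m ≥ 1 with j ≤ n, a composition (n_1,…,n_j) of n into j positive parts, a real α < 1, and real weights V(n,k) with V(n,j) ≠ 0. Let 1 ≤ l ≤ n+m, and for a tuple (m_1,…,m_j) set O_l = #{i ∈ {1,…,j} : n_i + m_i = l}. Then the expected number of old blocks of size l satisfies: ∑ O_l·J(m_1,…,m_j; s) = ∑_{i : n_i ≤ l ≤ n_i+m} binom(m, l−n_i)·(n_i−α)_{l−n_i}·∑_{k=0}^{m−l+n_i} (V(n+m,j+k)/V(n,j))·S(m−l+n_i, k; α, −(n−jα+α−n_i)), where the left sum ranges over all tuples (m_1,…,m_j) of nonnegative integers and s ≥ 0 with ∑_{i=1}^{j} m_i + s = m. -/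

import Mathlib

/-- Rising factorial `(x)_n = x(x+1)⋯(x+n−1)`. -/
noncomputable def risingFac (x : ℝ) (n : ℕ) : ℝ := ∏ i ∈ Finset.range n, (x + i)

/-- Rising factorial with increment `α`: `(x)_{n↑α} = ∏_{i<n} (x + iα)`. -/
noncomputable def risingFacInc (x α : ℝ) (n : ℕ) : ℝ := ∏ i ∈ Finset.range n, (x + i * α)

/-- Falling factorial `(x)_{[n]} = x(x−1)⋯(x−n+1)`. -/
noncomputable def fallingFac (x : ℝ) (n : ℕ) : ℝ := ∏ i ∈ Finset.range n, (x - i)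

/-- Compositions of `n` into `k` positive parts, as functions `Fin k → ℕ`. -/
def compositions (n k : ℕ) : Finset (Fin k → ℕ) :=
  (Fintype.piFinset fun _ => Finset.range (n + 1)).filter
    (fun f => (∀ i, 0 < f i) ∧ ∑ i, f i = n)

/-- Tuples of `k` nonnegative integers summing to `n`. -/
def weakCompositions (n k : ℕ) : Finset (Fin k → ℕ) :=
  (Fintype.piFinset fun _ => Finset.range (n + 1)).filter (fun f => ∑ i, f i = n)

/-- Generalized (central) Stirling number
`S(n,k;α) = (n!/k!) ∑_{(n_1,…,n_k)} ∏_j (1−α)_{n_j−1}/n_j!`,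
the sum over compositions of `n` into `k` positive parts. -/
noncomputable def genStirling (α : ℝ) (n k : ℕ) : ℝ :=
  (Nat.factorial n : ℝ) / (Nat.factorial k : ℝ) *
    ∑ f ∈ compositions n k, ∏ j, risingFac (1 - α) (f j - 1) / (Nat.factorial (f j) : ℝ)

/-- Non-central generalized Stirling number
`S(n,k;α,γ) = ∑_{s=k}^n C(n,s) S(s,k;α) (−γ)_{n−s}`. -/
noncomputable def genStirlingNC (α γ : ℝ) (n k : ℕ) : ℝ :=
  ∑ s ∈ Finset.Icc k n, (n.choose s : ℝ) * genStirling α s k * risingFac (-γ) (n - s)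

/-- The joint conditional distribution of old-block allocations
`J(m_1,…,m_j;s) = m!/(m_1!⋯m_j!·s!)·∏_i (n_i−α)_{m_i}·
∑_{k=0}^{s} (V(n+m,j+k)/V(n,j))·S(s,k;α)`. -/
noncomputable def oldJoint (α : ℝ) (V : ℕ → ℕ → ℝ) (n j m : ℕ) (nv : Fin j → ℕ)
    (mv : Fin j → ℕ) (s : ℕ) : ℝ :=
  (Nat.factorial m : ℝ) /
      ((∏ i, (Nat.factorial (mv i) : ℝ)) * (Nat.factorial s : ℝ)) *
    (∏ i, risingFac ((nv i : ℝ) - α) (mv i)) *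
    ∑ k ∈ Finset.range (s + 1), (V (n + m) (j + k) / V n j) * genStirling α s k

/-!
Write `#{i : n_i + m_i = l}` as a sum of indicators and exchange the sums: it suffices to compute,
for one old block `i`, the total weight of the tuples with `m_i = a := l - n_i`. Grouping the tuples
by `s = m - ∑ m_t`, the weight becomes `(m!/s!) ∏_t (x_t)_{m_t}/m_t!` with `x_t = n_t - α`, and the
sum over the coordinates `t ≠ i` is the multinomial Chu–Vandermonde identity
`∑_{∑ g = b} ∏ (x_t)_{g_t}/g_t! = (∑ x_t)_b / b!`, where `∑_{t ≠ i} x_t = n - jα + α - n_i`.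
What is left is the binomial convolution of `(n - jα + α - n_i)_{m-a-s}` with `S(s,k;α)`
defining the non-central Stirling number.
-/

open Finset
open scoped Nat

lemma risingFac_zero_right (x : ℝ) : risingFac x 0 = 1 := by
  simp [risingFac]

lemma risingFac_succ (x : ℝ) (n : ℕ) : risingFac x (n + 1) = risingFac x n * (x + n) := by
  simp [risingFac, prod_range_succ]

lemma risingFac_zero_succ (n : ℕ) : risingFac 0 (n + 1) = 0 := by
  simp [risingFac, prod_range_succ']

theorem risingFac_add (x y : ℝ) (n : ℕ) :
    risingFac (x + y) n =
      ∑ p ∈ antidiagonal n, (n.choose p.1 : ℝ) * (risingFac x p.1 * risingFac y p.2) := by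
  induction n with
  | zero => simp [risingFac_zero_right]
  | succ n ih =>
    rw [sum_antidiagonal_choose_succ_mul (fun a b ↦ risingFac x a * risingFac y b),
      risingFac_succ, ih, sum_mul, ← sum_add_distrib]
    refine sum_congr rfl fun p hp ↦ ?_
    rw [HasAntidiagonal.mem_antidiagonal] at hp
    rw [← Nat.choose_symm_of_eq_add hp.symm, risingFac_succ, risingFac_succ, ← hp]
    push_cast
    ring

theorem risingFac_add_div_factorial (x y : ℝ) (n : ℕ) :
    risingFac (x + y) n / n ! =
      ∑ p ∈ antidiagonal n, risingFac x p.1 / p.1 ! * (risingFac y p.2 / p.2 !) := by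
  rw [risingFac_add, sum_div]
  refine sum_congr rfl fun p hp ↦ ?_
  obtain rfl := HasAntidiagonal.mem_antidiagonal.mp hp
  rw [Nat.cast_choose ℝ (Nat.le_add_right _ _), Nat.add_sub_cancel_left]
  field_simp

theorem Finset.sum_piAntidiag_cons_mul_prod {ι R : Type*} [DecidableEq ι] [CommSemiring R]
    {s : Finset ι} {i : ι} (hi : i ∉ s) (ψ : ℕ → R) (u : ι → ℕ → R) (n : ℕ) :
    ∑ f ∈ piAntidiag (cons i s hi) n, ψ (f i) * ∏ t ∈ s, u t (f t) =
      ∑ p ∈ antidiagonal n, ψ p.1 * ∑ g ∈ piAntidiag s p.2, ∏ t ∈ s, u t (g t) := by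
  rw [piAntidiag_cons, sum_disjiUnion]
  refine sum_congr rfl fun p _ ↦ ?_
  rw [sum_map, mul_sum]
  refine sum_congr rfl fun g hg ↦ ?_
  have hgi : g i = 0 := by_contra fun h ↦ hi ((mem_piAntidiag.mp hg).2 i h)
  refine congrArg₂ _ (by simp [hgi]) (prod_congr rfl fun t ht ↦ ?_)
  simp [ne_of_mem_of_not_mem ht hi]

theorem sum_piAntidiag_prod_risingFac_div_factorial {ι : Type*} [DecidableEq ι]
    (s : Finset ι) (x : ι → ℝ) (n : ℕ) :
    ∑ f ∈ s.piAntidiag n, ∏ t ∈ s, risingFac (x t) (f t) / (f t) ! =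
      risingFac (∑ t ∈ s, x t) n / n ! := by
  induction s using Finset.cons_induction generalizing n with
  | empty => cases n <;> simp [risingFac_zero_right, risingFac_zero_succ]
  | cons i s hi ih =>
    simp_rw [prod_cons]
    rw [sum_piAntidiag_cons_mul_prod hi (fun k ↦ risingFac (x i) k / k !)
      (fun t k ↦ risingFac (x t) k / k !)]
    simp_rw [ih, sum_cons, risingFac_add_div_factorial]

theorem sum_filter_piAntidiag_prod_risingFac_div_factorial {ι : Type*} [DecidableEq ι]
    {s : Finset ι} {i : ι} (hs : i ∈ s) (x : ι → ℝ) (a n : ℕ) :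
    ∑ f ∈ (s.piAntidiag n).filter (· i = a), ∏ t ∈ s, risingFac (x t) (f t) / (f t) ! =
      if a ≤ n then
        risingFac (x i) a / a ! * (risingFac (∑ t ∈ s.erase i, x t) (n - a) / (n - a) !)
      else 0 := by
  obtain ⟨s, hi, rfl⟩ : ∃ s', ∃ hi' : i ∉ s', s = cons i s' hi' :=
    ⟨s.erase i, notMem_erase i s, by rw [cons_eq_insert, insert_erase hs]⟩
  have hsplit : ∀ f : ι → ℕ, (if f i = a then ∏ t ∈ cons i s hi, risingFac (x t) (f t) / (f t) !
      else 0) = (if f i = a then risingFac (x i) (f i) / (f i) ! else 0) *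
        ∏ t ∈ s, risingFac (x t) (f t) / (f t) ! := by
    intro f
    split_ifs
    · rw [prod_cons]
    · rw [zero_mul]
  rw [erase_cons, sum_filter, sum_congr rfl fun f _ ↦ hsplit f,
    sum_piAntidiag_cons_mul_prod hi (fun k ↦ if k = a then risingFac (x i) k / k ! else 0)
      (fun t k ↦ risingFac (x t) k / k !),
    Nat.sum_antidiagonal_eq_sum_range_succ
      (fun k l ↦ (if k = a then risingFac (x i) k / k ! else 0) *
        ∑ g ∈ s.piAntidiag l, ∏ t ∈ s, risingFac (x t) (g t) / (g t) !)]
  simp_rw [sum_piAntidiag_prod_risingFac_div_factorial, ite_mul, zero_mul, sum_ite_eq',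
    mem_range, Nat.lt_succ_iff]

def boundedTuples (ι : Type*) [Fintype ι] [DecidableEq ι] (m : ℕ) : Finset (ι → ℕ) :=
  (Fintype.piFinset fun _ : ι ↦ range (m + 1)).filter fun f ↦ ∑ t, f t ≤ m

theorem sum_boundedTuples_eq_sum_range_sum_piAntidiag {ι M : Type*} [Fintype ι] [DecidableEq ι]
    [AddCommMonoid M] (m : ℕ) (G : (ι → ℕ) → M) :
    ∑ f ∈ boundedTuples ι m, G f = ∑ s ∈ range (m + 1), ∑ f ∈ piAntidiag univ (m - s), G f := by
  rw [← sum_fiberwise_of_maps_to (g := fun f ↦ m - ∑ t, f t) (t := range (m + 1))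
    fun f _ ↦ mem_range.2 (by omega)]
  refine sum_congr rfl fun s hs ↦ sum_congr ?_ fun _ _ ↦ rfl
  rw [mem_range] at hs
  ext f
  simp only [boundedTuples, mem_filter, Fintype.mem_piFinset, mem_range, mem_piAntidiag,
    mem_univ, implies_true, and_true]
  constructor
  · rintro ⟨⟨-, hle⟩, rfl⟩
    exact (Nat.sub_sub_self hle).symm
  · intro (hsum : ∑ t, f t = m - s)
    refine ⟨⟨fun t ↦ ?_, by omega⟩, by omega⟩
    have := single_le_sum (fun t _ ↦ Nat.zero_le (f t)) (mem_univ t)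
    omega

theorem sum_filter_boundedTuples_apply_eq {ι : Type*} [Fintype ι] [DecidableEq ι]
    (x : ι → ℝ) (F : ℕ → ℝ) (i : ι) (m a : ℕ) :
    ∑ f ∈ (boundedTuples ι m).filter (· i = a),
        (m ! : ℝ) / ((∏ t, ((f t) ! : ℝ)) * ((m - ∑ t, f t) ! : ℝ)) *
          (∏ t, risingFac (x t) (f t)) * F (m - ∑ t, f t) =
      m.choose a * risingFac (x i) a *
        ∑ s ∈ range (m - a + 1),
          (m - a).choose s * risingFac (∑ t ∈ univ.erase i, x t) (m - a - s) * F s := by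
  set X := ∑ t ∈ univ.erase i, x t
  have hfibre : ∀ s ∈ range (m + 1),
      ∑ f ∈ piAntidiag univ (m - s), (if f i = a then
        (m ! : ℝ) / ((∏ t, ((f t) ! : ℝ)) * ((m - ∑ t, f t) ! : ℝ)) *
          (∏ t, risingFac (x t) (f t)) * F (m - ∑ t, f t) else 0) =
        m ! / s ! * F s * if a ≤ m - s then
          risingFac (x i) a / a ! * (risingFac X (m - s - a) / (m - s - a) !) else 0 := by
    intro s hs
    rw [← sum_filter_piAntidiag_prod_risingFac_div_factorial (mem_univ i), mul_sum, sum_filter]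
    refine sum_congr rfl fun f hf ↦ ?_
    rw [(mem_piAntidiag.mp hf).1, Nat.sub_sub_self (Nat.lt_succ_iff.mp (mem_range.mp hs))]
    split_ifs
    · rw [prod_div_distrib]
      field_simp
    · rfl
  rw [sum_filter, sum_boundedTuples_eq_sum_range_sum_piAntidiag, sum_congr rfl hfibre]
  rcases le_or_gt a m with ha | ha
  · rw [← sum_subset (range_subset_range.mpr (by omega : m - a + 1 ≤ m + 1)), mul_sum]
    · refine sum_congr rfl fun s hs ↦ ?_
      have hs : s ≤ m - a := Nat.lt_succ_iff.mp (mem_range.mp hs)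
      rw [if_pos (by omega), Nat.sub_right_comm, Nat.cast_choose ℝ ha, Nat.cast_choose ℝ hs]
      field_simp
    · intro s hs hs'
      rw [mem_range] at hs hs'
      rw [if_neg (by omega), mul_zero]
  · rw [Nat.choose_eq_zero_of_lt ha, Nat.cast_zero, zero_mul, zero_mul]
    exact sum_eq_zero fun s _ ↦ by rw [if_neg (by omega), mul_zero]

theorem sum_choose_mul_risingFac_mul_sum_genStirling (α y : ℝ) (w : ℕ → ℝ) (N : ℕ) :
    ∑ s ∈ range (N + 1), (N.choose s : ℝ) * risingFac y (N - s) *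
        ∑ k ∈ range (s + 1), w k * genStirling α s k =
      ∑ k ∈ range (N + 1), w k * genStirlingNC α (-y) N k := by
  simp_rw [genStirlingNC, neg_neg, mul_sum, range_eq_Ico, ← Ico_add_one_right_eq_Icc,
    sum_Ico_Ico_comm]
  refine sum_congr rfl fun s _ ↦ sum_congr rfl fun k _ ↦ ?_
  ring

theorem oldJoint_expected_size_l_general (n j m : ℕ)
    (nv : Fin j → ℕ) (hsum : ∑ i, nv i = n)
    (α : ℝ) (V : ℕ → ℕ → ℝ)
    (l : ℕ) :
    ∑ mv ∈ (Fintype.piFinset fun _ : Fin j => Finset.range (m + 1)).filter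
        (fun mv => ∑ i, mv i ≤ m),
        (((Finset.univ.filter fun i => nv i + mv i = l).card : ℕ) : ℝ) *
          oldJoint α V n j m nv mv (m - ∑ i, mv i) =
      ∑ i ∈ Finset.univ.filter (fun i => nv i ≤ l ∧ l ≤ nv i + m),
        (m.choose (l - nv i) : ℝ) * risingFac ((nv i : ℝ) - α) (l - nv i) *
          ∑ k ∈ Finset.range (m + nv i - l + 1),
            (V (n + m) (j + k) / V n j) *
              genStirlingNC α (-((n : ℝ) - j * α + α - nv i)) (m + nv i - l) k := by
  have hrest : ∀ i, ∑ t ∈ univ.erase i, ((nv t : ℝ) - α) = n - j * α + α - nv i := by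
    intro i
    rw [sum_erase_eq_sub (mem_univ i), sum_sub_distrib, sum_const, card_univ, Fintype.card_fin,
      nsmul_eq_mul, ← Nat.cast_sum, hsum]
    ring
  change ∑ mv ∈ boundedTuples (Fin j) m, _ = _
  simp_rw [card_filter, Nat.cast_sum, Nat.cast_ite, Nat.cast_one, Nat.cast_zero, sum_mul,
    boole_mul]
  rw [sum_comm, sum_filter]
  refine sum_congr rfl fun i _ ↦ ?_
  rw [← sum_filter]
  by_cases hil : nv i ≤ l
  · rw [filter_congr (q := (· i = l - nv i)) fun f _ ↦ by omega]
    simp only [oldJoint]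
    rw [sum_filter_boundedTuples_apply_eq (fun t ↦ (nv t : ℝ) - α)
      (fun s ↦ ∑ k ∈ range (s + 1), V (n + m) (j + k) / V n j * genStirling α s k),
      sum_choose_mul_risingFac_mul_sum_genStirling, hrest,
      show m - (l - nv i) = m + nv i - l by omega]
    split_ifs
    · rfl
    · rw [Nat.choose_eq_zero_of_lt (by omega), Nat.cast_zero, zero_mul, zero_mul]
  · rw [if_neg (by tauto)]
    exact sum_eq_zero fun f hf ↦ absurd (mem_filter.mp hf).2 (by omega)

/-- Expected number of old blocks of size `l` after allocating the additional
`m`-sample. -/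
theorem oldJoint_expected_size_l (n j m : ℕ) (hn : 1 ≤ n) (hj : 1 ≤ j)
    (hm : 1 ≤ m) (hjn : j ≤ n)
    (nv : Fin j → ℕ) (hnv : ∀ i, 0 < nv i) (hsum : ∑ i, nv i = n)
    (α : ℝ) (hα : α < 1) (V : ℕ → ℕ → ℝ) (hV : V n j ≠ 0)
    (l : ℕ) (hl : 1 ≤ l) (hln : l ≤ n + m) :
    ∑ mv ∈ (Fintype.piFinset fun _ : Fin j => Finset.range (m + 1)).filter
        (fun mv => ∑ i, mv i ≤ m),
        (((Finset.univ.filter fun i => nv i + mv i = l).card : ℕ) : ℝ) *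
          oldJoint α V n j m nv mv (m - ∑ i, mv i) =
      ∑ i ∈ Finset.univ.filter (fun i => nv i ≤ l ∧ l ≤ nv i + m),
        (m.choose (l - nv i) : ℝ) * risingFac ((nv i : ℝ) - α) (l - nv i) *
          ∑ k ∈ Finset.range (m + nv i - l + 1),
            (V (n + m) (j + k) / V n j) *
              genStirlingNC α (-((n : ℝ) - j * α + α - nv i)) (m + nv i - l) k :=
  oldJoint_expected_size_l_general n j m nv hsum α V l
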